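/- arXiv:2511.13512 — 7 statements merged into one kernel-verified Lean document; each statement's English description precedes it below -/
import Mathlib

section
/- Let T be a finite-dimensional real inner product space and let E, F be linear subspaces of T. Then dim E · dim F ≥ dim T · dim(E ∩ F) holds if and only if dim E⊥ · dim F⊥ ≥ dim T · dim(E⊥ ∩ F⊥) holds, where ⊥ denotes the orthogonal complement in T and dim denotes the dimension as a real vector space. -/
/-- **Lemma (orthog-red-sub).** Let `T` be a finite-dimensional real inner product space and
`E, F` linear subspaces of `T`. Then `dim E · dim F ≥ dim T · dim (E ⊓ F)` holds if and only if
`dim Eᗮ · dim Fᗮ ≥ dim T · dim (Eᗮ ⊓ Fᗮ)` holds. -/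
theorem stmt_0 {T : Type*} [NormedAddCommGroup T] [InnerProductSpace ℝ T]
    [FiniteDimensional ℝ T] (E F : Submodule ℝ T) :
    (Module.finrank ℝ T * Module.finrank ℝ ↥(E ⊓ F) ≤
        Module.finrank ℝ ↥E * Module.finrank ℝ ↥F) ↔
      (Module.finrank ℝ T * Module.finrank ℝ ↥(Eᗮ ⊓ Fᗮ) ≤
        Module.finrank ℝ ↥Eᗮ * Module.finrank ℝ ↥Fᗮ) := by
  have hinf : Eᗮ ⊓ Fᗮ = (E ⊔ F)ᗮ := Submodule.inf_orthogonal E F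
  have hE := Submodule.finrank_add_finrank_orthogonal E
  have hF := Submodule.finrank_add_finrank_orthogonal F
  have hS := Submodule.finrank_add_finrank_orthogonal (E ⊔ F)
  have hd := Submodule.finrank_sup_add_finrank_inf_eq E F
  rw [hinf]
  set n := Module.finrank ℝ T
  set e := Module.finrank ℝ ↥E
  set f := Module.finrank ℝ ↥F
  set i := Module.finrank ℝ ↥(E ⊓ F)
  set s := Module.finrank ℝ ↥(E ⊔ F)
  set e' := Module.finrank ℝ ↥Eᗮ
  set f' := Module.finrank ℝ ↥Fᗮ
  set s' := Module.finrank ℝ ↥(E ⊔ F)ᗮ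
  zify at *
  constructor <;> intro h <;> nlinarith [h, hE, hF, hS, hd]
end

section
/- Let (Ω, ℙ) and (A, λ) be probability spaces and let (A_ω)_{ω ∈ Ω} be a family of subsets of A such that the map (ω, x) ↦ 1_{A_ω}(x) is measurable on Ω × A. Let t ∈ (0,1) and assume λ(A_ω) ≥ t for every ω ∈ Ω. Then for every integer J ≥ 1, the product measure ℙ^{⊗J} of the set of tuples (ω₁, …, ω_J) such that λ(A_{ω₁} ∩ ⋯ ∩ A_{ω_J}) ≥ t^J/2 is at least t^J/2. -/
open MeasureTheory
open scoped ENNReal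

/-- Jensen's inequality for natural powers and the lower Lebesgue integral, via Hölder. -/
lemma pow_lintegral_le_aux {α : Type*} [MeasurableSpace α] (ν : Measure α)
    [IsProbabilityMeasure ν] (g : α → ℝ≥0∞) (hg : Measurable g) (n : ℕ) (hn : 1 ≤ n) :
    (∫⁻ x, g x ∂ν) ^ n ≤ ∫⁻ x, g x ^ n ∂ν := by
  rcases eq_or_lt_of_le hn with h1 | h2
  · simp [← h1]
  · have hp : (1 : ℝ) < (n : ℝ) := by exact_mod_cast h2
    have hn0 : (n : ℝ) ≠ 0 := by positivity
    have hpq := Real.HolderConjugate.conjExponent hp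
    have H := ENNReal.lintegral_mul_le_Lp_mul_Lq ν hpq hg.aemeasurable
      (aemeasurable_const (b := (1 : ℝ≥0∞)))
    simp only [Pi.mul_apply, mul_one, ENNReal.one_rpow, lintegral_const, measure_univ,
      ENNReal.one_rpow] at H
    have key : (∫⁻ x, g x ∂ν) ≤ (∫⁻ x, g x ^ (n : ℝ) ∂ν) ^ (1 / (n : ℝ)) := by
      simpa using H
    calc (∫⁻ x, g x ∂ν) ^ n ≤ ((∫⁻ x, g x ^ (n : ℝ) ∂ν) ^ (1 / (n : ℝ))) ^ n :=
          pow_le_pow_left' key n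
      _ = ∫⁻ x, g x ^ (n : ℝ) ∂ν := by
          rw [← ENNReal.rpow_natCast _ n, ← ENNReal.rpow_mul, one_div,
            inv_mul_cancel₀ hn0, ENNReal.rpow_one]
      _ = ∫⁻ x, g x ^ n ∂ν := by simp [ENNReal.rpow_natCast]

/-- **Lemma 4.7 (lem:intersection).**
Let `(Ω, P)` and `(A, lam)` be probability spaces, and let `(A_ω)_{ω ∈ Ω}` be a measurable
family of subsets of `A` (i.e. `(ω, x) ↦ 1_{A_ω}(x)` is measurable on the product).
Assume `lam (A_ω) ≥ t` for all `ω`, where `t ∈ (0,1)`.  Then for every integer `J ≥ 1`,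
the product measure of the tuples `(ω₁, …, ω_J)` with `lam (A_{ω₁} ∩ ⋯ ∩ A_{ω_J}) ≥ t^J/2`
is at least `t^J/2`. -/
theorem stmt_2 {Ω A : Type*} [MeasurableSpace Ω] [MeasurableSpace A]
    (P : Measure Ω) [IsProbabilityMeasure P]
    (lam : Measure A) [IsProbabilityMeasure lam]
    (As : Ω → Set A)
    (hmeas : MeasurableSet {q : Ω × A | q.2 ∈ As q.1})
    (t : ℝ) (ht0 : 0 < t) (ht1 : t < 1)
    (hAs : ∀ ω, ENNReal.ofReal t ≤ lam (As ω))
    (J : ℕ) (hJ : 1 ≤ J) :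
    ENNReal.ofReal (t ^ J / 2) ≤
      (Measure.pi fun _ : Fin J => P)
        {ω : Fin J → Ω | ENNReal.ofReal (t ^ J / 2) ≤ lam (⋂ j, As (ω j))} := by
  classical
  set μ : Measure (Fin J → Ω) := Measure.pi fun _ : Fin J => P with hμ
  set T : Set (Ω × A) := {q | q.2 ∈ As q.1} with hT
  set g : A → ℝ≥0∞ := fun x => P ((fun ω => (ω, x)) ⁻¹' T) with hg
  have hgmeas : Measurable g := measurable_measure_prodMk_right hmeas
  set S : Set ((Fin J → Ω) × A) := {p | ∀ j, p.2 ∈ As (p.1 j)} with hS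
  have hSmeas : MeasurableSet S := by
    have : S = ⋂ j, (fun p : (Fin J → Ω) × A => (p.1 j, p.2)) ⁻¹' T := by
      ext p; simp [hS, hT]
    rw [this]
    exact MeasurableSet.iInter fun j =>
      (((measurable_pi_apply j).comp measurable_fst).prodMk measurable_snd) hmeas
  set f : (Fin J → Ω) → ℝ≥0∞ := fun ω => lam (⋂ j, As (ω j)) with hf
  have hfeq : ∀ ω, f ω = lam (Prod.mk ω ⁻¹' S) := by
    intro ω
    have hx : (⋂ j, As (ω j)) = Prod.mk ω ⁻¹' S := by ext x; simp [hS]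
    simp [hf, hx]
  have hfmeas : Measurable f := by
    have := measurable_measure_prodMk_left (ν := lam) hSmeas
    simpa [← funext hfeq] using this
  -- lower bound on the integral of f
  have hint : ENNReal.ofReal t ^ J ≤ ∫⁻ ω, f ω ∂μ := by
    have h1 : ∫⁻ ω, f ω ∂μ = (μ.prod lam) S := by
      rw [Measure.prod_apply hSmeas]
      exact lintegral_congr hfeq
    have h2 : (μ.prod lam) S = ∫⁻ x, g x ^ J ∂lam := by
      rw [Measure.prod_apply_symm hSmeas]
      apply lintegral_congr
      intro x
      have hx : (fun ω : Fin J → Ω => (ω, x)) ⁻¹' S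
          = Set.pi Set.univ (fun _ : Fin J => {ω | x ∈ As ω}) := by
        ext ω; simp [hS, Set.mem_pi]
      rw [hx, Measure.pi_pi]
      simp [hg, hT, Finset.prod_const]
    have h3 : ENNReal.ofReal t ≤ ∫⁻ x, g x ∂lam := by
      have he : ∫⁻ x, g x ∂lam = (P.prod lam) T := (Measure.prod_apply_symm hmeas).symm
      rw [he, Measure.prod_apply hmeas]
      calc ENNReal.ofReal t = ∫⁻ _, ENNReal.ofReal t ∂P := by simp
        _ ≤ ∫⁻ ω, lam (As ω) ∂P := lintegral_mono hAs
        _ = ∫⁻ ω, lam (Prod.mk ω ⁻¹' T) ∂P := rfl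
    calc ENNReal.ofReal t ^ J ≤ (∫⁻ x, g x ∂lam) ^ J := pow_le_pow_left' h3 J
      _ ≤ ∫⁻ x, g x ^ J ∂lam := pow_lintegral_le_aux lam g hgmeas J hJ
      _ = (μ.prod lam) S := h2.symm
      _ = ∫⁻ ω, f ω ∂μ := h1.symm
  -- Markov-type step
  set s : ℝ≥0∞ := ENNReal.ofReal (t ^ J / 2) with hs
  set E : Set (Fin J → Ω) := {ω | s ≤ f ω} with hE
  have hEmeas : MeasurableSet E := hfmeas measurableSet_Ici
  have hbound : ∫⁻ ω, f ω ∂μ ≤ μ E + s := by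
    have hmono : ∀ ω, f ω ≤ E.indicator (fun _ => (1 : ℝ≥0∞)) ω + s := by
      intro ω
      by_cases h : ω ∈ E
      · rw [Set.indicator_of_mem h]
        exact le_add_right prob_le_one
      · rw [Set.indicator_of_notMem h, zero_add]
        exact le_of_not_ge (by simpa [hE] using h)
    calc ∫⁻ ω, f ω ∂μ ≤ ∫⁻ ω, E.indicator (fun _ => (1 : ℝ≥0∞)) ω + s ∂μ :=
          lintegral_mono hmono
      _ = μ E + s := by
          rw [lintegral_add_right _ measurable_const, lintegral_indicator hEmeas _,
            setLIntegral_one, lintegral_const, measure_univ, mul_one]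
  have hsum : s + s ≤ μ E + s := by
    have heq : ENNReal.ofReal t ^ J = s + s := by
      rw [hs, ← ENNReal.ofReal_pow ht0.le, ← ENNReal.ofReal_add (by positivity) (by positivity)]
      congr 1; ring
    calc s + s = ENNReal.ofReal t ^ J := heq.symm
      _ ≤ ∫⁻ ω, f ω ∂μ := hint
      _ ≤ μ E + s := hbound
  exact (ENNReal.add_le_add_iff_right ENNReal.ofReal_ne_top).mp hsum
end

section
/- Let F be a field, H a nonzero finite-dimensional F-vector space, and G a group acting on H by linear automorphisms such that the only G-invariant linear subspaces of H are {0} and H. Let 𝓛 be a collection of linear subspaces of H that contains {0} and H, is closed under sum and intersection, and is G-invariant (if V ∈ 𝓛 and g ∈ G then gV ∈ 𝓛). Then 𝓛 is complemented: for every V ∈ 𝓛 there exists V' ∈ 𝓛 with V ∩ V' = {0} and V + V' = H. -/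
open Module

/-!
Let `M` be a nonzero member of `L` of least dimension. Every translate `gM` is an atom of `L`:
for `W ∈ L` the intersection `gM ⊓ W` lies in `L`, so either `gM ≤ W` or `gM ⊓ W = ⊥`.
By irreducibility the translates of `M` span `H`. Now take `V' ∈ L` maximal with `V ⊓ V' = ⊥`.
A translate `gM` not contained in `V ⊔ V'` would meet it trivially, and then by modularity
`V ⊓ (V' ⊔ gM) = ⊥`, contradicting maximality. So `V ⊔ V'` contains every translate, hence is `⊤`.
-/

theorem exists_isCompl_of_le_or_disjoint {α : Type*} [Lattice α] [BoundedOrder α]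
    [IsModularLattice α] [WellFoundedGT α] {L A : Set α} (hbot : ⊥ ∈ L)
    (hsup : ∀ V ∈ L, ∀ W ∈ L, V ⊔ W ∈ L) (hAL : A ⊆ L)
    (hdich : ∀ a ∈ A, ∀ W ∈ L, a ≤ W ∨ Disjoint a W)
    (hA : ∀ W ∈ L, (∀ a ∈ A, a ≤ W) → W = ⊤) {V : α} (hV : V ∈ L) :
    ∃ V' ∈ L, IsCompl V V' := by
  obtain ⟨V', ⟨hV'L, hVV'⟩, hmax⟩ :=
    wellFounded_gt.has_min {W | W ∈ L ∧ Disjoint V W} ⟨⊥, hbot, disjoint_bot_right⟩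
  refine ⟨V', hV'L, hVV', codisjoint_iff.mpr (hA _ (hsup V hV V' hV'L) fun a ha => ?_)⟩
  obtain hle | hdisj := hdich a ha _ (hsup V hV V' hV'L)
  · exact hle
  have hdisj' : Disjoint V (V' ⊔ a) := hVV'.disjoint_sup_right_of_disjoint_sup_left hdisj.symm
  have hmax' : ¬ V' < V' ⊔ a := hmax _ ⟨hsup V' hV'L a (hAL ha), hdisj'⟩
  exact le_sup_of_le_right (not_not.mp (left_lt_sup.not.mp hmax'))

theorem Submodule.le_or_disjoint_of_finrank_le {F H : Type*} [DivisionRing F] [AddCommGroup H]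
    [Module F H] [FiniteDimensional F H] {N W : Submodule F H}
    (h : N ⊓ W ≠ ⊥ → finrank F N ≤ finrank F ↥(N ⊓ W)) : N ≤ W ∨ Disjoint N W := by
  by_cases hNW : N ⊓ W = ⊥
  · exact .inr (disjoint_iff.mpr hNW)
  · exact .inl (inf_eq_left.mp (Submodule.eq_of_le_of_finrank_le inf_le_left (h hNW)))

theorem Submodule.iSup_map_eq_top {R H G : Type*} [Semiring R] [AddCommMonoid H] [Module R H]
    [Monoid G] (ρ : G →* (H ≃ₗ[R] H))
    (hirr : ∀ U : Submodule R H, (∀ g : G, U.map (ρ g : H →ₗ[R] H) ≤ U) → U = ⊥ ∨ U = ⊤)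
    {M : Submodule R H} (hM : M ≠ ⊥) : ⨆ g, M.map (ρ g : H →ₗ[R] H) = ⊤ := by
  refine (hirr _ fun g => ?_).resolve_left fun h => hM (eq_bot_iff.mpr ?_)
  · rw [Submodule.map_iSup]
    refine iSup_le fun g' => ?_
    rw [← Submodule.map_comp, ← LinearEquiv.coe_trans, ← LinearEquiv.mul_eq_trans, ← map_mul]
    exact le_iSup (fun g => M.map (ρ g : H →ₗ[R] H)) (g * g')
  · exact h ▸ le_iSup_of_le (1 : G) (by simp)

theorem stmt_8_general {F H G : Type*} [Field F] [AddCommGroup H] [Module F H]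
    [FiniteDimensional F H] [Group G]
    (ρ : G →* (H ≃ₗ[F] H))
    (hirr : ∀ U : Submodule F H, (∀ g : G, U.map (ρ g : H →ₗ[F] H) ≤ U) → U = ⊥ ∨ U = ⊤)
    (L : Set (Submodule F H))
    (hbot : ⊥ ∈ L) (htop : ⊤ ∈ L)
    (hsup : ∀ V ∈ L, ∀ W ∈ L, V ⊔ W ∈ L)
    (hinf : ∀ V ∈ L, ∀ W ∈ L, V ⊓ W ∈ L)
    (hG : ∀ g : G, ∀ V ∈ L, V.map (ρ g : H →ₗ[F] H) ∈ L) :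
    ∀ V ∈ L, ∃ V' ∈ L, V ⊓ V' = ⊥ ∧ V ⊔ V' = ⊤ := by
  intro V hV
  rcases subsingleton_or_nontrivial H with _ | _
  · exact ⟨⊥, hbot, Subsingleton.elim _ _, Subsingleton.elim _ _⟩
  obtain ⟨M, ⟨hML, hM⟩, hmin⟩ := (measure fun U : Submodule F H => finrank F U).wf.has_min
    {U | U ∈ L ∧ U ≠ ⊥} ⟨⊤, htop, top_ne_bot⟩
  set A := Set.range fun g => M.map (ρ g : H →ₗ[F] H)
  have hAL : A ⊆ L := Set.range_subset_iff.mpr fun g => hG g M hML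
  have hdich : ∀ a ∈ A, ∀ W ∈ L, a ≤ W ∨ Disjoint a W := by
    rintro _ ⟨g, rfl⟩ W hW
    refine Submodule.le_or_disjoint_of_finrank_le fun hne => ?_
    rw [LinearEquiv.finrank_map_eq]
    exact not_lt.mp (hmin _ ⟨hinf _ (hG g M hML) W hW, hne⟩)
  have hA : ∀ W ∈ L, (∀ a ∈ A, a ≤ W) → W = ⊤ := fun W _ hW =>
    top_le_iff.mp (Submodule.iSup_map_eq_top ρ hirr hM ▸ iSup_le fun g => hW _ ⟨g, rfl⟩)
  obtain ⟨V', hV'L, hVV'⟩ := exists_isCompl_of_le_or_disjoint hbot hsup hAL hdich hA hV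
  exact ⟨V', hV'L, hVV'.inf_eq_bot, hVV'.sup_eq_top⟩

/-- **Lemma (split-lattice).**
Let `F` be a field, `H` a nonzero finite-dimensional `F`-vector space, and `G` a group acting
on `H` by linear automorphisms such that the only `G`-invariant subspaces of `H` are `{0}`
and `H`.  Let `𝓛` be a `G`-invariant sublattice of the Grassmannian of `H` (a collection of
subspaces containing `{0}` and `H`, closed under sum and intersection, and stable under `G`).
Then `𝓛` is complemented: every `V ∈ 𝓛` admits `V' ∈ 𝓛` with `V ⊕ V' = H`. -/
theorem stmt_8 {F H G : Type*} [Field F] [AddCommGroup H] [Module F H]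
    [FiniteDimensional F H] [Group G]
    (hH : 0 < finrank F H)
    (ρ : G →* (H ≃ₗ[F] H))
    (hirr : ∀ U : Submodule F H, (∀ g : G, U.map (ρ g : H →ₗ[F] H) ≤ U) → U = ⊥ ∨ U = ⊤)
    (L : Set (Submodule F H))
    (hbot : ⊥ ∈ L) (htop : ⊤ ∈ L)
    (hsup : ∀ V ∈ L, ∀ W ∈ L, V ⊔ W ∈ L)
    (hinf : ∀ V ∈ L, ∀ W ∈ L, V ⊓ W ∈ L)
    (hG : ∀ g : G, ∀ V ∈ L, V.map (ρ g : H →ₗ[F] H) ∈ L) :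
    ∀ V ∈ L, ∃ V' ∈ L, V ⊓ V' = ⊥ ∧ V ⊔ V' = ⊤ :=
  stmt_8_general ρ hirr L hbot htop hsup hinf hG
end

section
/- Let F be a field, H a nonzero finite-dimensional F-vector space, and let f be a function from the set of all linear subspaces of H to ℝ with f({0}) = 0 which is supermodular: f(V₁) + f(V₂) ≤ f(V₁ ∩ V₂) + f(V₁ + V₂) for all subspaces V₁, V₂. Let r ∈ ℝ be such that f(V) ≤ r · dim V for every subspace V of H. Then the set 𝓛 := { V : f(V) = r · dim V } contains {0} and is closed under sum and intersection: if V₁, V₂ ∈ 𝓛 then V₁ ∩ V₂ ∈ 𝓛 and V₁ + V₂ ∈ 𝓛. -/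
open Module

/-- **Lattice-theoretic core of Lemma 5.3 (eq-case-subl).**
Let `F` be a field, `H` a nonzero finite-dimensional `F`-vector space, and let
`f : Gr(H) → ℝ` be supermodular with `f({0}) = 0`.  If `r ∈ ℝ` satisfies
`f(V) ≤ r · dim V` for every subspace `V`, then the set `𝓛 = {V : f(V) = r · dim V}`
contains `{0}` and is closed under sum and intersection. -/
theorem stmt_9 {F H : Type*} [Field F] [AddCommGroup H] [Module F H]
    [FiniteDimensional F H]
    (hH : 0 < finrank F H)
    (f : Submodule F H → ℝ) (hf0 : f ⊥ = 0)
    (hsuper : ∀ V₁ V₂ : Submodule F H, f V₁ + f V₂ ≤ f (V₁ ⊓ V₂) + f (V₁ ⊔ V₂))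
    (r : ℝ) (hr : ∀ V : Submodule F H, f V ≤ r * (finrank F ↥V : ℝ)) :
    (⊥ : Submodule F H) ∈ {V : Submodule F H | f V = r * (finrank F ↥V : ℝ)} ∧
      ∀ V₁ ∈ {V : Submodule F H | f V = r * (finrank F ↥V : ℝ)},
        ∀ V₂ ∈ {V : Submodule F H | f V = r * (finrank F ↥V : ℝ)},
          V₁ ⊓ V₂ ∈ {V : Submodule F H | f V = r * (finrank F ↥V : ℝ)} ∧
          V₁ ⊔ V₂ ∈ {V : Submodule F H | f V = r * (finrank F ↥V : ℝ)} := by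
  constructor
  · simp [hf0]
  · intro V₁ h₁ V₂ h₂
    simp only [Set.mem_setOf_eq] at h₁ h₂ ⊢
    have hdim : (finrank F ↥(V₁ ⊔ V₂) : ℝ) + (finrank F ↥(V₁ ⊓ V₂) : ℝ)
        = (finrank F ↥V₁ : ℝ) + (finrank F ↥V₂ : ℝ) := by
      have := Submodule.finrank_sup_add_finrank_inf_eq V₁ V₂
      exact_mod_cast congrArg (Nat.cast : ℕ → ℝ) this
    have hs := hsuper V₁ V₂
    have hinf := hr (V₁ ⊓ V₂)
    have hsup := hr (V₁ ⊔ V₂)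
    have hd2 : r * (finrank F ↥(V₁ ⊔ V₂) : ℝ) + r * (finrank F ↥(V₁ ⊓ V₂) : ℝ)
        = r * (finrank F ↥V₁ : ℝ) + r * (finrank F ↥V₂ : ℝ) := by
      rw [← mul_add, ← mul_add, hdim]
    constructor <;> linarith
end

section
/- Let n ≥ 2. On ℂ^{2n} with standard basis (e_j)_{1≤j≤2n}, let ⟨x,y⟩_q := (1/2)·Σ_{l=1}^n (x_l y_{n+l} + x_{n+l} y_l), and let P := span_ℂ{ e_j : j ≠ 1 and j ≠ n+1 }. For w ∈ P let M_w be the endomorphism of ℂ^{2n} given by M_w v = −⟨w,v⟩_q e₁ + ⟨e₁,v⟩_q w, and let V₁ := { M_w : w ∈ P } ⊆ M_{2n}(ℂ). Let SO(q,ℂ) := { g ∈ GL_{2n}(ℂ) : det g = 1 and ⟨gx, gy⟩_q = ⟨x,y⟩_q for all x,y }. Then for all h₁, h₂, h₃, h₄ ∈ SO(q,ℂ), the four subspaces h_a V₁ h_a^{-1} of M_{2n}(ℂ) (a = 1,…,4) are not in direct sum: there exist X_a ∈ h_a V₁ h_a^{-1}, not all zero, with X₁ + X₂ + X₃ + X₄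 = 0. -/
/-!
Write `u ∧ x` for the endomorphism `v ↦ ⟨u,v⟩ x - ⟨x,v⟩ u`, so that `M_w = e₁ ∧ w`. Conjugating by
an isometry `h` gives `h M_w h⁻¹ = h e₁ ∧ h w`, and since `e₁^⊥ = ℂ e₁ ⊕ P`, the space `h V₁ h⁻¹`
consists of all `u ∧ x` with `u = h e₁` and `x ⊥ u`. So for nonzero `u₁, …, u₄` we need `x_a ⊥ u_a`
with `∑ u_a ∧ x_a = 0` and not every `u_a ∧ x_a` zero.

If the `u_a` are linearly independent, take `x_a = ∑_b T_ab u_b` with `T` symmetric with zero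
diagonal: `∑_a u_a ∧ x_a = 0` holds for every such `T` by antisymmetry of `∧`, and `x_a ⊥ u_a` is
four linear conditions on the six free entries of `T`. If `∑ s_a u_a = 0` nontrivially, take
`x_a = s_a x`, so that `∑ u_a ∧ x_a = (∑ s_a u_a) ∧ x = 0`, with `x` orthogonal to all `u_a`
(the `u_a` span at most three dimensions) or, when two of them are proportional, to just one.
-/

noncomputable section

/-- The symmetric bilinear form `⟨x,y⟩_q = (1/2)·Σ_{l=1}^n (x_l y_{n+l} + x_{n+l} y_l)`
on `ℂ^{2n}` (indices written `0`-based). -/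
def qform (n : ℕ) (x y : Fin (2 * n) → ℂ) : ℂ :=
  (1 / 2) * ∑ l : Fin n,
    (x ⟨l.1, by have := l.2; omega⟩ * y ⟨n + l.1, by have := l.2; omega⟩ +
      x ⟨n + l.1, by have := l.2; omega⟩ * y ⟨l.1, by have := l.2; omega⟩)

/-- The index `l` (`1 ≤ l ≤ n` in math notation) of `ℂ^{2n}`. -/
def idxA {n : ℕ} (l : Fin n) : Fin (2 * n) := ⟨l.1, by have := l.2; omega⟩

/-- The index `n + l` (`1 ≤ l ≤ n` in math notation) of `ℂ^{2n}`. -/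
def idxB {n : ℕ} (l : Fin n) : Fin (2 * n) := ⟨n + l.1, by have := l.2; omega⟩

/-- `Y_{1,l} = E_{1,l} − E_{n+l,n+1}`. -/
def Ymat {n : ℕ} (hn : 0 < n) (l : Fin n) : Matrix (Fin (2 * n)) (Fin (2 * n)) ℂ :=
  Matrix.single (idxA ⟨0, hn⟩) (idxA l) 1 -
    Matrix.single (idxB l) (idxB ⟨0, hn⟩) 1

/-- `Z_{1,l} = E_{1,n+l} − E_{l,n+1}`. -/
def Zmat {n : ℕ} (hn : 0 < n) (l : Fin n) : Matrix (Fin (2 * n)) (Fin (2 * n)) ℂ :=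
  Matrix.single (idxA ⟨0, hn⟩) (idxB l) 1 -
    Matrix.single (idxA l) (idxB ⟨0, hn⟩) 1

end

open Module

theorem Submodule.mem_span_of_single_mem {ι R : Type*} [Fintype ι] [DecidableEq ι] [Semiring R]
    {S : Set (ι → R)} {v : ι → R} (hv : ∀ j, v j ≠ 0 → Pi.single j 1 ∈ S) :
    v ∈ Submodule.span R S := by
  rw [← Finset.univ_sum_single v]
  refine Submodule.sum_mem _ fun j _ => ?_
  by_cases hj : v j = 0
  · simp [hj]
  · rw [← mul_one (v j), ← smul_eq_mul, Pi.single_smul]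
    exact Submodule.smul_mem _ _ (Submodule.subset_span (hv j hj))

theorem Finset.sum_sum_smul_eq_zero_of_symm_of_alternating {ι R M : Type*} [Fintype ι]
    [Semiring R] [AddCommGroup M] [Module R M]
    (T : ι → ι → R) (hT : ∀ a b, T a b = T b a)
    (w : ι → ι → M) (hw : ∀ a b, w a b = -w b a) (hw₀ : ∀ a, w a a = 0) :
    ∑ a, ∑ b, T a b • w a b = 0 := by
  rw [← Finset.sum_product']
  refine Finset.sum_involution (fun p _ => p.swap) (fun p _ => ?_) (fun p _ hp hswap => ?_)
    (fun p _ => Finset.mem_univ _) (fun p _ => p.swap_swap)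
  · simp [hT p.2 p.1, hw p.2 p.1]
  · obtain ⟨a, b⟩ := p
    obtain rfl : a = b := congrArg Prod.fst hswap |>.symm
    simp [hw₀] at hp

theorem Matrix.GeneralLinearGroup.toLin'_mul_mul_inv {m R : Type*} [Fintype m] [DecidableEq m]
    [CommRing R] (h : GL m R) (M : Matrix m m R) :
    Matrix.toLin' ((h : Matrix m m R) * M * ((h⁻¹ : GL m R) : Matrix m m R)) =
      (toLin h).toLinearEquiv.conj (Matrix.toLin' M) := by
  rw [Matrix.toLin'_mul, Matrix.toLin'_mul]
  rfl

section SymmetricZeroDiag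

variable {K : Type*} [Field K]

def symmetricZeroDiag : (Fin 6 → K) →ₗ[K] Matrix (Fin 4) (Fin 4) K where
  toFun z := !![0, z 0, z 1, z 2; z 0, 0, z 3, z 4; z 1, z 3, 0, z 5; z 2, z 4, z 5, 0]
  map_add' z z' := by ext a b; fin_cases a <;> fin_cases b <;> simp
  map_smul' c z := by ext a b; fin_cases a <;> fin_cases b <;> simp

theorem symmetricZeroDiag_comm (z : Fin 6 → K) (a b : Fin 4) :
    symmetricZeroDiag z a b = symmetricZeroDiag z b a := by
  fin_cases a <;> fin_cases b <;> rfl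

theorem exists_symmetricZeroDiag_ne_zero {z : Fin 6 → K} (hz : z ≠ 0) :
    ∃ a b, a ≠ b ∧ symmetricZeroDiag z a b ≠ 0 := by
  obtain ⟨k, hk⟩ := Function.ne_iff.mp hz
  fin_cases k
  exacts [⟨0, 1, by decide, hk⟩, ⟨0, 2, by decide, hk⟩, ⟨0, 3, by decide, hk⟩,
    ⟨1, 2, by decide, hk⟩, ⟨1, 3, by decide, hk⟩, ⟨2, 3, by decide, hk⟩]

theorem exists_symmetricZeroDiag_rowSums_eq_zero (c : Matrix (Fin 4) (Fin 4) K) :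
    ∃ z ≠ 0, ∀ a, ∑ b, symmetricZeroDiag z a b * c a b = 0 := by
  let rowSums : (Fin 6 → K) →ₗ[K] Fin 4 → K :=
    { toFun z a := ∑ b, symmetricZeroDiag z a b * c a b
      map_add' z z' := by ext a; simp [add_mul, Finset.sum_add_distrib]
      map_smul' r z := by ext a; simp [Finset.mul_sum, mul_assoc] }
  have hker : LinearMap.ker rowSums ≠ ⊥ := LinearMap.ker_ne_bot_of_finrank_lt (by simp)
  obtain ⟨z, hz, hz0⟩ := (Submodule.ne_bot_iff _).mp hker
  exact ⟨z, hz0, fun a => congrFun hz a⟩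

end SymmetricZeroDiag

namespace LinearMap.BilinForm

section CommRing

variable {R V : Type*} [CommRing R] [AddCommGroup V] [Module R V] (B : LinearMap.BilinForm R V)

def wedge : V →ₗ[R] V →ₗ[R] Module.End R V :=
  LinearMap.mk₂ R (fun u x => (B u).smulRight x - (B x).smulRight u)
    (fun u u' x => by ext v; simp [add_smul]; abel)
    (fun c u x => by ext v; simp [smul_smul, smul_sub, mul_comm])
    (fun u x x' => by ext v; simp [add_smul]; abel)
    (fun c u x => by ext v; simp [smul_smul, smul_sub, mul_comm])

@[simp]
theorem wedge_apply (u x v : V) : B.wedge u x v = B u v • x - B x v • u := rfl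

theorem wedge_swap (u x : V) : B.wedge x u = -B.wedge u x := by
  ext v; simp

@[simp]
theorem wedge_self (u : V) : B.wedge u u = 0 := by
  ext v; simp

theorem conj_wedge (g : V ≃ₗ[R] V) (hg : ∀ x y, B (g x) (g y) = B x y) (u x : V) :
    g.conj (B.wedge u x) = B.wedge (g u) (g x) := by
  ext v
  have hv : ∀ y, B y (g.symm v) = B (g y) v := fun y => by rw [← hg, g.apply_symm_apply]
  simp [LinearEquiv.conj_apply, hv]

theorem exists_mem_wedge_eq {e : V} {P : Submodule R V} (hP : LinearMap.ker (B e) ≤ (R ∙ e) ⊔ P)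
    (g : V ≃ₗ[R] V) (hg : ∀ x y, B (g x) (g y) = B x y) {x : V} (hx : B (g e) x = 0) :
    ∃ w ∈ P, B.wedge (g e) (g w) = B.wedge (g e) x := by
  have hy : g.symm x ∈ LinearMap.ker (B e) := by
    rw [LinearMap.mem_ker, ← hg, g.apply_symm_apply, hx]
  obtain ⟨_, hce, w, hw, hsum⟩ := Submodule.mem_sup.mp (hP hy)
  obtain ⟨c, rfl⟩ := Submodule.mem_span_singleton.mp hce
  refine ⟨w, hw, ?_⟩
  have hgw : g w = x - c • g e := by
    rw [eq_sub_iff_add_eq', ← map_smul, ← map_add, hsum, g.apply_symm_apply]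
  simp [hgw]

end CommRing

section Field

variable {K V : Type*} [Field K] [AddCommGroup V] [Module K V] (B : LinearMap.BilinForm K V)

theorem wedge_ne_zero (hB : B.SeparatingLeft) {u x : V} (hu : u ≠ 0) (hx : x ∉ K ∙ u) :
    B.wedge u x ≠ 0 := by
  intro h
  obtain ⟨v, hv⟩ : ∃ v, B u v ≠ 0 := by
    by_contra! h'
    exact hu (hB u h')
  apply hx
  rw [Submodule.mem_span_singleton]
  refine ⟨(B u v)⁻¹ * B x v, ?_⟩
  have : B u v • x = B x v • u := sub_eq_zero.mp (by simpa using LinearMap.congr_fun h v)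
  rw [mul_smul, ← this, smul_smul, inv_mul_cancel₀ hv, one_smul]

variable {ι : Type*} [Fintype ι]

/-- `x` exhibits that the spaces `{B.wedge (u a) y | B (u a) y = 0}` are not in direct sum. -/
def IsNontrivialWedgeRelation (u x : ι → V) : Prop :=
  (∀ a, B (u a) (x a) = 0) ∧ (∃ a, B.wedge (u a) (x a) ≠ 0) ∧ ∑ a, B.wedge (u a) (x a) = 0

theorem isNontrivialWedgeRelation_smul (hB : B.SeparatingLeft) {u : ι → V} {s : ι → K}
    (hs : ∑ c, s c • u c = 0) {x : V} (hx : ∀ c, s c ≠ 0 → B (u c) x = 0) {c₀ : ι}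
    (hc₀ : s c₀ ≠ 0) (hu : u c₀ ≠ 0) (hxu : x ∉ K ∙ u c₀) :
    B.IsNontrivialWedgeRelation u (fun c => s c • x) := by
  refine ⟨fun c => ?_, ⟨c₀, ?_⟩, ?_⟩
  · by_cases hc : s c = 0 <;> simp [hc, hx]
  · rw [map_smul]
    exact smul_ne_zero hc₀ (B.wedge_ne_zero hB hu hxu)
  · calc ∑ c, B.wedge (u c) (s c • x) = ∑ c, B.wedge (s c • u c) x := by simp
      _ = B.wedge (∑ c, s c • u c) x := by rw [map_sum, LinearMap.sum_apply]
      _ = 0 := by rw [hs, map_zero, LinearMap.zero_apply]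

theorem exists_isNontrivialWedgeRelation_of_linearIndependent (hB : B.SeparatingLeft)
    {u : Fin 4 → V} (hu : LinearIndependent K u) : ∃ x, B.IsNontrivialWedgeRelation u x := by
  obtain ⟨z, hz, hzu⟩ :=
    exists_symmetricZeroDiag_rowSums_eq_zero (Matrix.of fun a b => B (u a) (u b))
  obtain ⟨a₁, b₁, hab, hT⟩ := exists_symmetricZeroDiag_ne_zero hz
  set T := symmetricZeroDiag z
  refine ⟨fun a => ∑ b, T a b • u b, fun a => by simpa using hzu a,
    ⟨a₁, B.wedge_ne_zero hB (hu.ne_zero a₁) ?_⟩, ?_⟩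
  · intro hmem
    obtain ⟨c, hc⟩ := Submodule.mem_span_singleton.mp hmem
    have hcoeff := Fintype.linearIndependent_iffₛ.mp hu (Pi.single a₁ c) (T a₁)
      (by simpa [Pi.single_apply, ite_smul] using hc) b₁
    rw [Pi.single_eq_of_ne hab.symm] at hcoeff
    exact hT hcoeff.symm
  · simp only [map_sum, map_smul]
    exact Finset.sum_sum_smul_eq_zero_of_symm_of_alternating T (symmetricZeroDiag_comm z) _
      (fun a b => B.wedge_swap _ _) (fun a => B.wedge_self _)

variable [FiniteDimensional K V]

theorem exists_apply_eq_zero_notMem_span (hV : 3 ≤ finrank K V) (u : V) :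
    ∃ x, B u x = 0 ∧ x ∉ K ∙ u := by
  by_contra! h
  have hker := Submodule.finrank_mono (show LinearMap.ker (B u) ≤ K ∙ u from h)
  have hspan : finrank K (K ∙ u) ≤ 1 := (finrank_span_le_card {u}).trans (by simp)
  have hrange : finrank K (LinearMap.range (B u)) ≤ 1 :=
    (Submodule.finrank_le _).trans (by simp)
  have := (B u).finrank_range_add_finrank_ker
  omega

theorem exists_ne_zero_forall_apply_eq_zero {ι : Type*} [Fintype ι]
    (hV : Fintype.card ι ≤ finrank K V) {u : ι → V} (hu : ¬LinearIndependent K u) :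
    ∃ x ≠ 0, ∀ c, B (u c) x = 0 := by
  classical
  obtain ⟨s, hs, a₀, ha₀⟩ := Fintype.not_linearIndependent_iff.mp hu
  let g : V →ₗ[K] ι → K := LinearMap.pi fun c => B (u c)
  have hrange : LinearMap.range g ≠ ⊤ := by
    intro htop
    apply ha₀
    obtain ⟨v, hv⟩ := LinearMap.range_eq_top.mp htop (Pi.single a₀ 1)
    calc s a₀ = ∑ c, s c * g v c := by simp [hv, Pi.single_apply]
      _ = B (∑ c, s c • u c) v := by simp [g, map_sum]
      _ = 0 := by rw [hs, map_zero, LinearMap.zero_apply]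
  have hker : LinearMap.ker g.rangeRestrict ≠ ⊥ :=
    LinearMap.ker_ne_bot_of_finrank_lt ((Submodule.finrank_lt hrange).trans_le (by simpa using hV))
  obtain ⟨x, hx, hx0⟩ := (Submodule.ne_bot_iff _).mp hker
  rw [LinearMap.ker_rangeRestrict] at hx
  exact ⟨x, hx0, fun c => congrFun hx c⟩

theorem exists_isNontrivialWedgeRelation_of_not_linearIndependent (hB : B.SeparatingLeft)
    {ι : Type*} [Fintype ι] (hV : 3 ≤ finrank K V) (hVι : Fintype.card ι ≤ finrank K V)
    {u : ι → V} (hu : ∀ a, u a ≠ 0) (hli : ¬LinearIndependent K u) :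
    ∃ x, B.IsNontrivialWedgeRelation u x := by
  classical
  obtain ⟨s, hs, a₀, ha₀⟩ := Fintype.not_linearIndependent_iff.mp hli
  obtain ⟨b, hb, hsb⟩ : ∃ b ≠ a₀, s b ≠ 0 := by
    by_contra! h
    rw [Fintype.sum_eq_single a₀ fun c hc => by simp [h c hc]] at hs
    exact smul_ne_zero ha₀ (hu a₀) hs
  by_cases hba : u b ∈ K ∙ u a₀
  · obtain ⟨τ, hτ⟩ := Submodule.mem_span_singleton.mp hba
    obtain ⟨x, hx, hxu⟩ := B.exists_apply_eq_zero_notMem_span hV (u a₀)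
    have hτ0 : τ ≠ 0 := by rintro rfl; exact hu b (by simp [← hτ])
    refine ⟨_, B.isNontrivialWedgeRelation_smul hB (s := Pi.single a₀ τ - Pi.single b 1)
      ?_ (fun c hc => ?_) (c₀ := a₀) (by simp [hb.symm, hτ0]) (hu a₀) hxu⟩
    · simp [sub_smul, Finset.sum_sub_distrib, Pi.single_apply, ite_smul, hτ]
    · obtain rfl | rfl : c = a₀ ∨ c = b := by
        by_contra! h; simp [h.1, h.2] at hc
      exacts [hx, by simp [← hτ, hx]]
  · obtain ⟨x, hx0, hx⟩ := B.exists_ne_zero_forall_apply_eq_zero hVι hli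
    by_cases hxa : x ∈ K ∙ u a₀
    · have hxb : x ∉ K ∙ u b := fun hxb => by
        obtain ⟨β, rfl⟩ := Submodule.mem_span_singleton.mp hxb
        have hβ : β ≠ 0 := by rintro rfl; simp at hx0
        exact hba (Submodule.mem_span_singleton_trans
          (Submodule.mem_span_singleton.mpr ⟨β⁻¹, inv_smul_smul₀ hβ _⟩) hxa)
      exact ⟨_, B.isNontrivialWedgeRelation_smul hB hs (fun c _ => hx c) hsb (hu b) hxb⟩
    · exact ⟨_, B.isNontrivialWedgeRelation_smul hB hs (fun c _ => hx c) ha₀ (hu a₀) hxa⟩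

theorem exists_isNontrivialWedgeRelation (hB : B.SeparatingLeft) (hV : 4 ≤ finrank K V)
    {u : Fin 4 → V} (hu : ∀ a, u a ≠ 0) : ∃ x, B.IsNontrivialWedgeRelation u x := by
  by_cases hli : LinearIndependent K u
  · exact B.exists_isNontrivialWedgeRelation_of_linearIndependent hB hli
  · exact B.exists_isNontrivialWedgeRelation_of_not_linearIndependent hB (by omega)
      (by simpa using hV) hu hli

end Field

end LinearMap.BilinForm

section QForm

variable {n : ℕ}

theorem qform_eq (x y : Fin (2 * n) → ℂ) :
    qform n x y = (1 / 2) * ∑ l, (x (idxA l) * y (idxB l) + x (idxB l) * y (idxA l)) := rfl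

theorem qform_comm (x y : Fin (2 * n) → ℂ) : qform n x y = qform n y x := by
  simp only [qform_eq]; congr 1; exact Finset.sum_congr rfl fun l _ => by ring

variable (n) in
noncomputable def qformBilin : LinearMap.BilinForm ℂ (Fin (2 * n) → ℂ) :=
  LinearMap.mk₂ ℂ (qform n)
    (fun x x' y => by
      simp only [qform_eq, Pi.add_apply, ← mul_add, ← Finset.sum_add_distrib]
      exact congrArg _ (Finset.sum_congr rfl fun l _ => by ring))
    (fun c x y => by
      simp only [qform_eq, Pi.smul_apply, smul_eq_mul, Finset.mul_sum]
      exact Finset.sum_congr rfl fun l _ => by ring)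
    (fun x y y' => by
      simp only [qform_eq, Pi.add_apply, ← mul_add, ← Finset.sum_add_distrib]
      exact congrArg _ (Finset.sum_congr rfl fun l _ => by ring))
    (fun c x y => by
      simp only [qform_eq, Pi.smul_apply, smul_eq_mul, Finset.mul_sum]
      exact Finset.sum_congr rfl fun l _ => by ring)

@[simp]
theorem qformBilin_apply (x y : Fin (2 * n) → ℂ) : qformBilin n x y = qform n x y := rfl

theorem idxA_injective : Function.Injective (idxA (n := n)) := fun l m h => by
  simpa [idxA, Fin.ext_iff] using h

theorem idxB_injective : Function.Injective (idxB (n := n)) := fun l m h => by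
  simpa [idxB, Fin.ext_iff] using h

theorem idxA_ne_idxB (l m : Fin n) : idxA l ≠ idxB m := by
  simp [idxA, idxB, Fin.ext_iff]; omega

theorem exists_eq_idxA_or_eq_idxB (j : Fin (2 * n)) : ∃ l, j = idxA l ∨ j = idxB l := by
  rcases lt_or_ge j.1 n with hj | hj
  · exact ⟨⟨j, hj⟩, Or.inl rfl⟩
  · exact ⟨⟨j - n, by omega⟩, Or.inr (by ext; simp [idxB]; omega)⟩

theorem qform_single_idxA (x : Fin (2 * n) → ℂ) (l : Fin n) :
    qform n x (Pi.single (idxA l) 1) = x (idxB l) / 2 := by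
  simp [qform_eq, Pi.single_apply, idxA_injective.eq_iff, idxA_ne_idxB]
  ring

theorem qform_single_idxB (x : Fin (2 * n) → ℂ) (l : Fin n) :
    qform n x (Pi.single (idxB l) 1) = x (idxA l) / 2 := by
  simp [qform_eq, Pi.single_apply, idxB_injective.eq_iff, (idxA_ne_idxB _ _).symm]
  ring

theorem qformBilin_separatingLeft : (qformBilin n).SeparatingLeft := by
  intro x hx
  ext j
  obtain ⟨l, rfl | rfl⟩ := exists_eq_idxA_or_eq_idxB j
  · simpa [qform_single_idxB] using hx (Pi.single (idxB l) 1)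
  · simpa [qform_single_idxA] using hx (Pi.single (idxA l) 1)

theorem ker_qformBilin_single_le (hn : 0 < n) :
    LinearMap.ker (qformBilin n (Pi.single ⟨0, by omega⟩ 1)) ≤
      (ℂ ∙ Pi.single ⟨0, by omega⟩ 1) ⊔ Submodule.span ℂ
        {v : Fin (2 * n) → ℂ | ∃ j : Fin (2 * n), j.1 ≠ 0 ∧ j.1 ≠ n ∧ v = Pi.single j 1} := by
  intro v hv
  set i₀ : Fin (2 * n) := ⟨0, by omega⟩
  have hvn : v (idxB ⟨0, hn⟩) = 0 := by
    have : qform n v (Pi.single (idxA ⟨0, hn⟩) 1) = 0 := by rw [qform_comm]; exact hv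
    simpa [qform_single_idxA] using this
  refine Submodule.mem_sup.mpr ⟨v i₀ • Pi.single i₀ 1,
    Submodule.smul_mem _ _ (Submodule.mem_span_singleton_self _), _,
    Submodule.mem_span_of_single_mem fun j hj => ⟨j, fun h0 => hj ?_, fun hn' => hj ?_, rfl⟩,
    add_sub_cancel _ _⟩
  · obtain rfl : j = i₀ := Fin.ext h0
    simp
  · obtain rfl : j = idxB ⟨0, hn⟩ := Fin.ext (by simp [idxB, hn'])
    have : (Pi.single i₀ 1 : Fin (2 * n) → ℂ) (idxB ⟨0, hn⟩) = 0 :=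
      Pi.single_eq_of_ne (idxA_ne_idxB ⟨0, hn⟩ ⟨0, hn⟩).symm _
    simp [hvn, this]

end QForm

/-- **Lemma B.4 (complex-case).**
Let `n ≥ 2`.  On `ℂ^{2n}`, let `P = span{e_j : j ≠ 1, n+1}` and, for `w ∈ P`, let `M_w` be
the matrix acting by `M_w v = −⟨w,v⟩_q e₁ + ⟨e₁,v⟩_q w`; set `V₁ = {M_w : w ∈ P}`.
For all `h₁, h₂, h₃, h₄ ∈ SO(q,ℂ)`, the four subspaces `h_a V₁ h_a⁻¹` of `M_{2n}(ℂ)` are not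
in direct sum: some nontrivial choice `X_a ∈ h_a V₁ h_a⁻¹` sums to zero. -/
theorem stmt_12 (n : ℕ) (hn : 2 ≤ n)
    (e1 : Fin (2 * n) → ℂ)
    (he1 : e1 = Pi.single (⟨0, by omega⟩ : Fin (2 * n)) 1)
    (P : Submodule ℂ (Fin (2 * n) → ℂ))
    (hP : P = Submodule.span ℂ
      {v : Fin (2 * n) → ℂ | ∃ j : Fin (2 * n), j.1 ≠ 0 ∧ j.1 ≠ n ∧ v = Pi.single j 1})
    (Mf : (Fin (2 * n) → ℂ) → Matrix (Fin (2 * n)) (Fin (2 * n)) ℂ)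
    (hMf : ∀ w v : Fin (2 * n) → ℂ,
      (Mf w).mulVec v = (-(qform n w v)) • e1 + (qform n e1 v) • w)
    (h : Fin 4 → GL (Fin (2 * n)) ℂ)
    (hq : ∀ (a : Fin 4) (x y : Fin (2 * n) → ℂ),
      qform n ((h a : Matrix (Fin (2 * n)) (Fin (2 * n)) ℂ).mulVec x)
          ((h a : Matrix (Fin (2 * n)) (Fin (2 * n)) ℂ).mulVec y) = qform n x y) :
    ∃ X : Fin 4 → Matrix (Fin (2 * n)) (Fin (2 * n)) ℂ,
      (∀ a, ∃ w ∈ P, X a =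
        (h a : Matrix (Fin (2 * n)) (Fin (2 * n)) ℂ) * Mf w *
          ((h a)⁻¹ : GL (Fin (2 * n)) ℂ)) ∧
      (∃ a, X a ≠ 0) ∧ ∑ a, X a = 0 := by
  subst he1 hP
  set e1 : Fin (2 * n) → ℂ := Pi.single ⟨0, by omega⟩ 1
  set B := qformBilin n
  let g : Fin 4 → (Fin (2 * n) → ℂ) ≃ₗ[ℂ] (Fin (2 * n) → ℂ) :=
    fun a => (Matrix.GeneralLinearGroup.toLin (h a)).toLinearEquiv
  have hg : ∀ a x y, B (g a x) (g a y) = B x y := hq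
  have hM : ∀ w, Matrix.toLin' (Mf w) = B.wedge e1 w := fun w => LinearMap.ext fun v => by
    rw [Matrix.toLin'_apply, hMf, neg_smul, neg_add_eq_sub]
    rfl
  obtain ⟨x, hxu, ⟨a₀, ha₀⟩, hsum⟩ := B.exists_isNontrivialWedgeRelation
    qformBilin_separatingLeft (by simp; omega) (u := fun a => g a e1)
    (fun a => (g a).map_ne_zero_iff.mpr (Pi.single_ne_zero_iff.mpr one_ne_zero))
  choose w hwP hw using fun a =>
    B.exists_mem_wedge_eq (ker_qformBilin_single_le (by omega)) (g a) (hg a) (hxu a)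
  set X : Fin 4 → Matrix (Fin (2 * n)) (Fin (2 * n)) ℂ := fun a =>
    (h a : Matrix (Fin (2 * n)) (Fin (2 * n)) ℂ) * Mf (w a) * ((h a)⁻¹ : GL (Fin (2 * n)) ℂ)
  have hX : ∀ a, Matrix.toLin' (X a) = B.wedge (g a e1) (x a) := fun a => by
    rw [Matrix.GeneralLinearGroup.toLin'_mul_mul_inv, hM, B.conj_wedge _ (hg a), hw a]
  refine ⟨X, fun a => ⟨w a, hwP a, rfl⟩, ⟨a₀, fun h0 => ha₀ ?_⟩, Matrix.toLin'.injective ?_⟩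
  · rw [← hX, h0, map_zero]
  · rw [map_sum, map_zero]
    simpa only [hX] using hsum
end

section
/- Let d ≥ 1, let 𝒬 be a countable partition of ℝ^d into Borel sets, and let ν be a Borel measure on ℝ^d supported on the closed unit ball with ν(ℝ^d) ≤ 1. Let C, c > 0 and assume that every Borel set A ⊆ ℝ^d with ν(A) ≥ c meets at least C cells of 𝒬. Then there exists a Borel set E ⊆ ℝ^d with ν(E) ≤ c such that ν(Q ∖ E) ≤ C^{-1} for every cell Q ∈ 𝒬. -/
open MeasureTheory
open scoped ENNReal

/-- **Lemma A.1 (slicing-to-measures).**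
Let `d ≥ 1`, let `(Q n)_{n : ℕ}` be a countable partition of `ℝ^d` into Borel sets, and let
`ν` be a Borel measure on `ℝ^d` supported on the closed unit ball with `ν(ℝ^d) ≤ 1`.
Let `C, c > 0` and assume that every Borel set `A` with `ν(A) ≥ c` meets at least `C` cells
of the partition.  Then there is a Borel set `E` with `ν(E) ≤ c` and `ν(Q n \ E) ≤ C⁻¹`
for every cell. -/
theorem stmt_14 (d : ℕ) (hd : 1 ≤ d)
    (Q : ℕ → Set (EuclideanSpace ℝ (Fin d)))
    (hQmeas : ∀ n, MeasurableSet (Q n))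
    (hQdisj : Pairwise (Function.onFun Disjoint Q))
    (hQcover : (⋃ n, Q n) = Set.univ)
    (ν : Measure (EuclideanSpace ℝ (Fin d)))
    (hsupp : ν (Metric.closedBall 0 1)ᶜ = 0)
    (hmass : ν Set.univ ≤ 1)
    (C c : ℝ) (hC : 0 < C) (hc : 0 < c)
    (hmeets : ∀ A : Set (EuclideanSpace ℝ (Fin d)), MeasurableSet A →
      ENNReal.ofReal c ≤ ν A →
      ENNReal.ofReal C ≤ (({n : ℕ | (A ∩ Q n).Nonempty}.encard : ℕ∞) : ℝ≥0∞)) :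
    ∃ E : Set (EuclideanSpace ℝ (Fin d)), MeasurableSet E ∧
      ν E ≤ ENNReal.ofReal c ∧ ∀ n, ν (Q n \ E) ≤ ENNReal.ofReal C⁻¹ := by

  classical
  set x : ℝ≥0∞ := ENNReal.ofReal C⁻¹ with hx
  have hx0 : x ≠ 0 := (ENNReal.ofReal_pos.2 (inv_pos.2 hC)).ne'
  have hxtop : x ≠ ∞ := ENNReal.ofReal_ne_top
  set S : Set ℕ := {n | x < ν (Q n)} with hSdef
  -- the sum of measures over S is at most 1
  have hsum : ∀ s : Set ℕ, ∑' n : s, ν (Q n) ≤ 1 := by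
    intro s
    rw [← measure_biUnion s.to_countable (fun n _ m _ hnm => hQdisj hnm)
      (fun n _ => hQmeas n)]
    exact (measure_mono (Set.subset_univ _)).trans hmass
  -- S is finite
  have hSfin : S.Finite := by
    by_contra hinf
    have : (∞ : ℝ≥0∞) ≤ 1 := by
      have hI : Infinite S := Set.infinite_coe_iff.2 hinf
      calc (∞ : ℝ≥0∞) = ∑' _ : S, x := (ENNReal.tsum_const_eq_top_of_ne_zero hx0).symm
        _ ≤ ∑' n : S, ν (Q n) := ENNReal.tsum_le_tsum (fun n => le_of_lt n.2)
        _ ≤ 1 := hsum S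
    simp at this
  have hfin : ∑ n ∈ hSfin.toFinset, ν (Q n) = ∑' n : S, ν (Q (n : ℕ)) := by
    have h := Finset.tsum_subtype' hSfin.toFinset (fun n => ν (Q n))
    rw [hSfin.coe_toFinset] at h
    exact h.symm
  -- the cardinality of S is strictly less than C
  have hcard : (S.encard : ℝ≥0∞) < ENNReal.ofReal C := by
    rcases S.eq_empty_or_nonempty with hSe | ⟨n₀, hn₀⟩
    · simp [hSe, ENNReal.ofReal_pos.2 hC]
    · have hkx : (S.encard : ℝ≥0∞) * x < 1 := by
        have hmem : n₀ ∈ hSfin.toFinset := hSfin.mem_toFinset.2 hn₀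
        have h1 : (S.encard : ℝ≥0∞) * x = ∑ n ∈ hSfin.toFinset, x := by
          rw [Finset.sum_const, hSfin.encard_eq_coe_toFinset_card]
          simp [mul_comm]
        rw [h1, ← Finset.add_sum_erase _ _ hmem]
        have h2 : ∑ n ∈ hSfin.toFinset.erase n₀, x ≤
            ∑ n ∈ hSfin.toFinset.erase n₀, ν (Q n) :=
          Finset.sum_le_sum (fun n hn => le_of_lt (hSfin.mem_toFinset.1
            (Finset.mem_of_mem_erase hn)))
        have h3 : x + ∑ n ∈ hSfin.toFinset.erase n₀, x <
            ν (Q n₀) + ∑ n ∈ hSfin.toFinset.erase n₀, ν (Q n) :=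
          ENNReal.add_lt_add_of_lt_of_le
            (ENNReal.sum_lt_top.2 (fun _ _ => hxtop.lt_top)).ne hn₀ h2
        refine h3.trans_le ?_
        rw [Finset.add_sum_erase _ (fun n => ν (Q n)) hmem]
        exact hfin.le.trans (hsum S)
      have : (S.encard : ℝ≥0∞) < x⁻¹ := by
        rw [← one_div]
        exact (ENNReal.lt_div_iff_mul_lt (Or.inl hx0) (Or.inl hxtop)).2 hkx
      rwa [hx, ← ENNReal.ofReal_inv_of_pos (inv_pos.2 hC), inv_inv] at this
  refine ⟨⋃ n ∈ S, Q n, MeasurableSet.biUnion S.to_countable (fun n _ => hQmeas n), ?_, ?_⟩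
  · by_contra h
    push_neg at h
    have hle := hmeets _ (MeasurableSet.biUnion S.to_countable (fun n _ => hQmeas n)) h.le
    have hsub : {n : ℕ | ((⋃ m ∈ S, Q m) ∩ Q n).Nonempty} ⊆ S := by
      rintro n ⟨y, hy1, hy2⟩
      simp only [Set.mem_iUnion] at hy1
      obtain ⟨m, hm, hym⟩ := hy1
      rcases eq_or_ne m n with rfl | hne
      · exact hm
      · exact absurd (Set.not_disjoint_iff.2 ⟨y, hym, hy2⟩) (by
          exact fun hcon => hcon (hQdisj hne))
    have := hle.trans (ENat.toENNReal_le.2 (Set.encard_le_encard hsub))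
    exact absurd this (not_le.2 hcard)
  · intro n
    by_cases hn : n ∈ S
    · have : Q n \ ⋃ m ∈ S, Q m = ∅ := by
        apply Set.diff_eq_empty.2
        exact Set.subset_biUnion_of_mem hn
      simp [this]
    · exact (measure_mono Set.diff_subset).trans (not_lt.1 hn)
end

section
/- Let (Θ, σ) be a probability space and (A, λ) a finite measure space. Let 𝒫(θ, A') be a predicate, with θ ∈ Θ and A' a measurable subset of A, which is decreasingly monotone in A': if 𝒫(θ, A') holds and A'' ⊆ A' is measurable, then 𝒫(θ, A'') holds. For a measurable A' ⊆ A and ρ ∈ (0, 1/16), let ℰ^𝒫(A', ρ) := { θ ∈ Θ : ∃ measurable A'' ⊆ A' with λ(A'') ≥ ρ·λ(A') and 𝒫(θ, A'') }. Let (S_i)_{i ∈ I} be a finite family of pairwise disjoint measurable subsets of A whose union S := ⋃_{i ∈ I} S_i satisfies λ(S) > 0 and is contained in a measurable set A' ⊆ A with λ(A' ∖ S) ≤ ρ^{3/2}·λ(A'). Assume each set ℰ^𝒫(S_i, ρ^{3/2}) is σ-measurable. Then the σ-outer measure of ℰ^𝒫(A', ρ) is at most 2·ρ^{-1}·sup_{i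 ∈ I} σ(ℰ^𝒫(S_i, ρ^{3/2})). -/
/-!
Put `r = ρ^{3/2}` and `g θ = ∑ i, lam (S i) · 1[θ ∈ ℰ(S i, r)]`. A witness `A''` for
`θ ∈ ℰ(A', ρ)` has mass at least `ρ · lam A'`. At most `r · lam A'` of it lies outside `⋃ S i`,
and at most `r · lam A'` lies in pieces where its relative density is below `r`; on every other
piece `A'' ∩ S i` witnesses `θ ∈ ℰ(S i, r)` by monotonicity of `P`. Hence
`g θ ≥ (ρ - 2r) lam A' ≥ (ρ/2) lam A'`, and Markov's inequality for `g` bounds the outer measure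
of `ℰ(A', ρ)` by `(2/ρ) ∫ g dσ / lam A' ≤ (2/ρ) sup_i σ (ℰ(S i, r))`.
-/

open MeasureTheory

open scoped ENNReal

/-- The paper's `ℰ^𝒫(A, r)`. -/
def witnessSet {Θ α : Type*} [MeasurableSpace α] (lam : Measure α) (P : Θ → Set α → Prop)
    (A : Set α) (r : ℝ) : Set Θ :=
  {θ | ∃ A'' : Set α, MeasurableSet A'' ∧ A'' ⊆ A ∧ ENNReal.ofReal r * lam A ≤ lam A'' ∧ P θ A''}

theorem rpow_three_halves_le_div_four {ρ : ℝ} (hρ0 : 0 ≤ ρ) (hρ : ρ ≤ 1 / 16) :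
    ρ ^ ((3 : ℝ) / 2) ≤ ρ / 4 := by
  have hsqrt : Real.sqrt ρ ≤ 1 / 4 := by
    rw [Real.sqrt_le_left (by norm_num)]
    linarith
  have hsplit : ρ ^ ((3 : ℝ) / 2) = ρ * Real.sqrt ρ := by
    rw [Real.sqrt_eq_rpow, show (3 : ℝ) / 2 = 1 + 1 / 2 by norm_num,
      Real.rpow_add' hρ0 (by norm_num), Real.rpow_one]
  rw [hsplit]
  nlinarith

theorem measure_le_sum_dense_add {α ι : Type*} [MeasurableSpace α] (μ : Measure α) (t : ℝ≥0∞)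
    (I : Finset ι) (S : ι → Set α) (B : Set α) :
    μ B ≤ ∑ i ∈ I with t * μ (S i) ≤ μ (B ∩ S i), μ (S i) + t * ∑ i ∈ I, μ (S i)
      + μ (B \ ⋃ i ∈ I, S i) := by
  calc μ B ≤ μ (B ∩ ⋃ i ∈ I, S i) + μ (B \ ⋃ i ∈ I, S i) := measure_le_inter_add_sdiff μ _ _
    _ ≤ ∑ i ∈ I, μ (B ∩ S i) + μ (B \ ⋃ i ∈ I, S i) := by
        gcongr
        rw [Set.inter_iUnion₂]
        exact measure_biUnion_finset_le _ _
    _ = ∑ i ∈ I with t * μ (S i) ≤ μ (B ∩ S i), μ (B ∩ S i)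
          + ∑ i ∈ I with ¬ t * μ (S i) ≤ μ (B ∩ S i), μ (B ∩ S i) + μ (B \ ⋃ i ∈ I, S i) := by
        rw [Finset.sum_filter_add_sum_filter_not]
    _ ≤ ∑ i ∈ I with t * μ (S i) ≤ μ (B ∩ S i), μ (S i)
          + ∑ i ∈ I with ¬ t * μ (S i) ≤ μ (B ∩ S i), t * μ (S i)
          + μ (B \ ⋃ i ∈ I, S i) := by
        gcongr with i _ i hi
        · exact Set.inter_subset_right
        · exact (not_le.1 (Finset.mem_filter.1 hi).2).le
    _ ≤ ∑ i ∈ I with t * μ (S i) ≤ μ (B ∩ S i), μ (S i) + ∑ i ∈ I, t * μ (S i)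
          + μ (B \ ⋃ i ∈ I, S i) := by
        gcongr
        exact Finset.filter_subset _ _
    _ = _ := by rw [Finset.mul_sum]

theorem ofReal_mul_le_sum_indicator_witnessSet {Θ α ι : Type*} [MeasurableSpace α]
    {lam : Measure α} {P : Θ → Set α → Prop}
    (hmono : ∀ (θ : Θ) (A' A'' : Set α), MeasurableSet A' → MeasurableSet A'' →
      A'' ⊆ A' → P θ A' → P θ A'')
    {I : Finset ι} {S : ι → Set α} (hSmeas : ∀ i ∈ I, MeasurableSet (S i))
    {A : Set α} {ρ : ℝ} (r : ℝ) {θ : Θ} (hθ : θ ∈ witnessSet lam P A ρ) :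
    ENNReal.ofReal ρ * lam A ≤
      ∑ i ∈ I, (witnessSet lam P (S i) r).indicator (fun _ => lam (S i)) θ
        + ENNReal.ofReal r * ∑ i ∈ I, lam (S i) + lam (A \ ⋃ i ∈ I, S i) := by
  obtain ⟨B, hBmeas, hBA, hBmass, hPB⟩ := hθ
  have hdense : ∀ i ∈ I, ENNReal.ofReal r * lam (S i) ≤ lam (B ∩ S i) →
      θ ∈ witnessSet lam P (S i) r := fun i hi hi' =>
    ⟨B ∩ S i, hBmeas.inter (hSmeas i hi), Set.inter_subset_right, hi',
      hmono θ B _ hBmeas (hBmeas.inter (hSmeas i hi)) Set.inter_subset_left hPB⟩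
  calc ENNReal.ofReal ρ * lam A ≤ lam B := hBmass
    _ ≤ _ := measure_le_sum_dense_add lam (ENNReal.ofReal r) I S B
    _ ≤ _ := by
        gcongr
        rw [Finset.sum_filter]
        gcongr with i hi
        split_ifs with h
        · rw [Set.indicator_of_mem (hdense i hi h)]
        · exact zero_le

theorem mul_meas_ge_le_sum_mul_measure {Θ ι : Type*} [MeasurableSpace Θ] (σ : Measure Θ)
    (I : Finset ι) (T : ι → Set Θ) (w : ι → ℝ≥0∞) (hT : ∀ i ∈ I, MeasurableSet (T i))
    (c : ℝ≥0∞) :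
    c * σ {θ | c ≤ ∑ i ∈ I, (T i).indicator (fun _ => w i) θ} ≤ ∑ i ∈ I, w i * σ (T i) := by
  have hmeas : ∀ i ∈ I, Measurable ((T i).indicator fun _ => w i) := fun i hi =>
    measurable_const.indicator (hT i hi)
  calc _ ≤ ∫⁻ θ, ∑ i ∈ I, (T i).indicator (fun _ => w i) θ ∂σ :=
        mul_meas_ge_le_lintegral₀ (Finset.measurable_sum _ hmeas).aemeasurable c
    _ = ∑ i ∈ I, w i * σ (T i) := by
        rw [lintegral_finsetSum _ hmeas]
        exact Finset.sum_congr rfl fun i hi => lintegral_indicator_const (hT i hi) _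

theorem witnessSet_subset_half_le_sum_indicator {Θ α ι : Type*} [MeasurableSpace α]
    {lam : Measure α} [IsFiniteMeasure lam] {P : Θ → Set α → Prop}
    (hmono : ∀ (θ : Θ) (A' A'' : Set α), MeasurableSet A' → MeasurableSet A'' →
      A'' ⊆ A' → P θ A' → P θ A'')
    {I : Finset ι} {S : ι → Set α} (hSmeas : ∀ i ∈ I, MeasurableSet (S i))
    (hdisj : ∀ i ∈ I, ∀ j ∈ I, i ≠ j → Disjoint (S i) (S j))
    {A : Set α} (hSA : (⋃ i ∈ I, S i) ⊆ A) {ρ r : ℝ} (hρ0 : 0 ≤ ρ) (hrρ : r ≤ ρ / 4)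
    (hsmall : lam (A \ ⋃ i ∈ I, S i) ≤ ENNReal.ofReal r * lam A) :
    witnessSet lam P A ρ ⊆
      {θ | ENNReal.ofReal (ρ / 2) * lam A ≤
        ∑ i ∈ I, (witnessSet lam P (S i) r).indicator (fun _ => lam (S i)) θ} := by
  intro θ hθ
  have hsum : ∑ i ∈ I, lam (S i) ≤ lam A := by
    rw [← measure_biUnion_finset hdisj hSmeas]
    exact measure_mono hSA
  have herror : ENNReal.ofReal r * ∑ i ∈ I, lam (S i) + lam (A \ ⋃ i ∈ I, S i) ≤
      ENNReal.ofReal (ρ / 2) * lam A :=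
    calc _ ≤ ENNReal.ofReal r * lam A + ENNReal.ofReal r * lam A := by gcongr
      _ ≤ ENNReal.ofReal (ρ / 2) * lam A := by
          rw [← two_mul, ← mul_assoc, ← ENNReal.ofReal_ofNat 2,
            ← ENNReal.ofReal_mul zero_le_two]
          gcongr
          linarith
  have hhalves : ENNReal.ofReal ρ * lam A =
      ENNReal.ofReal (ρ / 2) * lam A + ENNReal.ofReal (ρ / 2) * lam A := by
    rw [← add_mul, ← ENNReal.ofReal_add (by linarith) (by linarith), add_halves]
  refine ENNReal.le_of_add_le_add_right (a := ENNReal.ofReal (ρ / 2) * lam A) (by finiteness) ?_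
  calc _ = ENNReal.ofReal ρ * lam A := hhalves.symm
    _ ≤ _ := ofReal_mul_le_sum_indicator_witnessSet hmono hSmeas r hθ
    _ ≤ _ := by rw [add_assoc]; gcongr

theorem stmt_15_general {Θ α ι : Type*} [MeasurableSpace Θ] [MeasurableSpace α]
    (σ : Measure Θ)
    (lam : Measure α) [IsFiniteMeasure lam]
    (P : Θ → Set α → Prop)
    (hmono : ∀ (θ : Θ) (A' A'' : Set α), MeasurableSet A' → MeasurableSet A'' →
      A'' ⊆ A' → P θ A' → P θ A'')
    (E : Set α → ℝ → Set Θ)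
    (hE : ∀ (A' : Set α) (r : ℝ), E A' r =
      {θ : Θ | ∃ A'' : Set α, MeasurableSet A'' ∧ A'' ⊆ A' ∧
        ENNReal.ofReal r * lam A' ≤ lam A'' ∧ P θ A''})
    (ρ : ℝ) (hρ0 : 0 < ρ) (hρ : ρ < 1 / 16)
    (I : Finset ι) (S : ι → Set α)
    (hSmeas : ∀ i ∈ I, MeasurableSet (S i))
    (hdisj : ∀ i ∈ I, ∀ j ∈ I, i ≠ j → Disjoint (S i) (S j))
    (A' : Set α)
    (hSA' : (⋃ i ∈ I, S i) ⊆ A')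
    (hSpos : 0 < lam (⋃ i ∈ I, S i))
    (hsmall : lam (A' \ ⋃ i ∈ I, S i) ≤ ENNReal.ofReal (ρ ^ ((3 : ℝ) / 2)) * lam A')
    (hEmeas : ∀ i ∈ I, MeasurableSet (E (S i) (ρ ^ ((3 : ℝ) / 2)))) :
    σ (E A' ρ) ≤ ENNReal.ofReal (2 / ρ) * ⨆ i ∈ I, σ (E (S i) (ρ ^ ((3 : ℝ) / 2))) := by
  obtain rfl : E = witnessSet lam P := funext₂ hE
  set r := ρ ^ ((3 : ℝ) / 2)
  set B := ⨆ i ∈ I, σ (witnessSet lam P (S i) r)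
  set c := ENNReal.ofReal (ρ / 2) * lam A'
  have hc0 : c ≠ 0 := mul_ne_zero (by simpa using hρ0) (hSpos.trans_le (measure_mono hSA')).ne'
  have hcB : c * (ENNReal.ofReal (2 / ρ) * B) = lam A' * B := by
    rw [mul_mul_mul_comm, ← ENNReal.ofReal_mul (by positivity),
      show ρ / 2 * (2 / ρ) = 1 by field_simp, ENNReal.ofReal_one, one_mul]
  rw [← ENNReal.mul_le_mul_iff_right hc0 (by finiteness), hcB]
  calc c * σ (witnessSet lam P A' ρ)
      ≤ c * σ {θ | c ≤ ∑ i ∈ I, (witnessSet lam P (S i) r).indicator (fun _ => lam (S i)) θ} := by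
        gcongr
        exact witnessSet_subset_half_le_sum_indicator hmono hSmeas hdisj hSA' hρ0.le
          (rpow_three_halves_le_div_four hρ0.le hρ.le) hsmall
    _ ≤ ∑ i ∈ I, lam (S i) * σ (witnessSet lam P (S i) r) :=
        mul_meas_ge_le_sum_mul_measure σ I _ _ hEmeas c
    _ ≤ ∑ i ∈ I, lam (S i) * B := by
        gcongr with i hi
        exact le_biSup (fun i => σ (witnessSet lam P (S i) r)) hi
    _ ≤ lam A' * B := by
        rw [← Finset.sum_mul, ← measure_biUnion_finset hdisj hSmeas]
        gcongr

/-- **Lemma A.5 (lm:exhaustion).**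
Let `(Θ, σ)` be a probability space and `(α, lam)` a finite measure space.  Let `P θ A'` be a
predicate, monotone decreasing in the measurable set `A'`, and write
`E A' r = {θ : ∃ measurable A'' ⊆ A', lam A'' ≥ r·lam A' ∧ P θ A''}`.
If `(S i)_{i ∈ I}` is a finite family of pairwise disjoint measurable sets whose union `S`
has positive measure and is contained in a measurable `A'` with
`lam (A' \ S) ≤ ρ^{3/2}·lam A'`, and each `E (S i) (ρ^{3/2})` is measurable, then
`σ*(E A' ρ) ≤ 2 ρ⁻¹ · sup_{i ∈ I} σ (E (S i) (ρ^{3/2}))`. -/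
theorem stmt_15 {Θ α ι : Type*} [MeasurableSpace Θ] [MeasurableSpace α]
    (σ : Measure Θ) [IsProbabilityMeasure σ]
    (lam : Measure α) [IsFiniteMeasure lam]
    (P : Θ → Set α → Prop)
    (hmono : ∀ (θ : Θ) (A' A'' : Set α), MeasurableSet A' → MeasurableSet A'' →
      A'' ⊆ A' → P θ A' → P θ A'')
    (E : Set α → ℝ → Set Θ)
    (hE : ∀ (A' : Set α) (r : ℝ), E A' r =
      {θ : Θ | ∃ A'' : Set α, MeasurableSet A'' ∧ A'' ⊆ A' ∧
        ENNReal.ofReal r * lam A' ≤ lam A'' ∧ P θ A''})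
    (ρ : ℝ) (hρ0 : 0 < ρ) (hρ : ρ < 1 / 16)
    (I : Finset ι) (S : ι → Set α)
    (hSmeas : ∀ i ∈ I, MeasurableSet (S i))
    (hdisj : ∀ i ∈ I, ∀ j ∈ I, i ≠ j → Disjoint (S i) (S j))
    (A' : Set α) (hA'meas : MeasurableSet A')
    (hSA' : (⋃ i ∈ I, S i) ⊆ A')
    (hSpos : 0 < lam (⋃ i ∈ I, S i))
    (hsmall : lam (A' \ ⋃ i ∈ I, S i) ≤ ENNReal.ofReal (ρ ^ ((3 : ℝ) / 2)) * lam A')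
    (hEmeas : ∀ i ∈ I, MeasurableSet (E (S i) (ρ ^ ((3 : ℝ) / 2)))) :
    σ (E A' ρ) ≤ ENNReal.ofReal (2 / ρ) * ⨆ i ∈ I, σ (E (S i) (ρ ^ ((3 : ℝ) / 2))) :=
  stmt_15_general σ lam P hmono E hE ρ hρ0 hρ I S hSmeas hdisj A' hSA' hSpos hsmall hEmeas
end
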